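/- arXiv:q-alg/9506022 — 3 statements merged into one kernel-verified Lean document; each statement's English description precedes it below -/
import Mathlib

section
/- If x and y are elements of an associative (noncommutative) algebra satisfying y·x = q·x·y, then the q-exponentials satisfy the addition theorem exp_q(x + y) = exp_q(x)·exp_q(y), where exp_q(z) = Σ_{n≥0} z^n/(n)_q! with (n)_q = (q^n − 1)/(q − 1). -/
/-- The `q`-integer `(n)_q = 1 + q + ⋯ + q^(n-1) = (q^n - 1)/(q - 1)`. -/
def qInt {K : Type*} [Field K] (q : K) (n : ℕ) : K := ∑ i ∈ Finset.range n, q ^ i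

/-- The `q`-factorial `(n)_q! = (1)_q (2)_q ⋯ (n)_q`. -/
def qFact {K : Type*} [Field K] (q : K) (n : ℕ) : K := ∏ j ∈ Finset.range n, qInt q (j + 1)

/-- The `q`-exponential `exp_q(t x) = Σ_{n≥0} x^n t^n/(n)_q!`, as a formal power
series in `t` with coefficients in `A`. -/
noncomputable def qExp {K : Type*} [Field K] {A : Type*} [Ring A] [Algebra K A]
    (q : K) (x : A) : PowerSeries A :=
  PowerSeries.mk fun n => (qFact q n)⁻¹ • x ^ n

/-- The Gaussian (q-)binomial coefficient, as a ratio of q-factorials. -/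
noncomputable def qBin {K : Type*} [Field K] (q : K) (n k : ℕ) : K :=
  qFact q n / (qFact q k * qFact q (n - k))

section aux

variable {K : Type*} [Field K] (q : K)

lemma qFact_zero : qFact q 0 = 1 := by simp [qFact]

lemma qFact_succ (n : ℕ) : qFact q (n + 1) = qFact q n * qInt q (n + 1) :=
  Finset.prod_range_succ _ _

lemma qInt_add (a b : ℕ) : qInt q (a + b) = qInt q a + q ^ a * qInt q b := by
  simp [qInt, Finset.sum_range_add, Finset.mul_sum, pow_add]

variable {q} (hq : ∀ n : ℕ, qFact q n ≠ 0)
include hq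

lemma qInt_ne_zero (n : ℕ) : qInt q (n + 1) ≠ 0 := by
  intro h0
  exact hq (n + 1) (by rw [qFact_succ, h0, mul_zero])

lemma qBin_zero (n : ℕ) : qBin q n 0 = 1 := by
  simp [qBin, qFact_zero, hq n]

lemma qBin_self (n : ℕ) : qBin q n n = 1 := by
  simp [qBin, qFact_zero, hq n]

lemma qBin_rec {n k : ℕ} (h1 : 1 ≤ k) (h2 : k ≤ n) :
    qBin q (n + 1) k = q ^ (n + 1 - k) * qBin q n (k - 1) + qBin q n k := by
  obtain ⟨j, rfl⟩ : ∃ j, k = j + 1 := ⟨k - 1, by omega⟩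
  obtain ⟨a, rfl⟩ : ∃ a, n = j + 1 + a := ⟨n - (j + 1), by omega⟩
  have e1 : j + 1 + a + 1 - (j + 1) = a + 1 := by omega
  have e2 : j + 1 + a - j = a + 1 := by omega
  have e3 : j + 1 + a - (j + 1) = a := by omega
  simp only [qBin, Nat.add_sub_cancel, e1, e2, e3]
  have f1 : qFact q (j + 1 + a + 1) = qFact q (j + 1 + a) * qInt q (j + 1 + a + 1) :=
    qFact_succ q _
  have f2 : qFact q (j + 1) = qFact q j * qInt q (j + 1) := qFact_succ q _
  have f3 : qFact q (a + 1) = qFact q a * qInt q (a + 1) := qFact_succ q _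
  have f4 : qInt q (j + 1 + a + 1) = qInt q (a + 1) + q ^ (a + 1) * qInt q (j + 1) := by
    have : j + 1 + a + 1 = (a + 1) + (j + 1) := by ring
    rw [this, qInt_add]
  rw [f1, f2, f3, f4]
  have hj : qInt q (j + 1) ≠ 0 := qInt_ne_zero hq j
  have ha : qInt q (a + 1) ≠ 0 := qInt_ne_zero hq a
  have hFj : qFact q j ≠ 0 := hq j
  have hFa : qFact q a ≠ 0 := hq a
  field_simp
  ring

end aux

section binom

variable {K : Type*} [Field K] {A : Type*} [Ring A] [Algebra K A]
  {q : K} (x y : A) (h : y * x = q • (x * y))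
include h

lemma ypow_mul (m : ℕ) : y ^ m * x = q ^ m • (x * y ^ m) := by
  induction m with
  | zero => simp
  | succ m ih =>
    calc y ^ (m + 1) * x = y ^ m * (y * x) := by rw [pow_succ, mul_assoc]
    _ = y ^ m * (q • (x * y)) := by rw [h]
    _ = q • (y ^ m * x * y) := by rw [mul_smul_comm, mul_assoc]
    _ = q • ((q ^ m • (x * y ^ m)) * y) := by rw [ih]
    _ = (q ^ (m + 1)) • (x * y ^ (m + 1)) := by
        rw [smul_mul_assoc, smul_smul, pow_succ', pow_succ, mul_assoc]

variable (hq : ∀ n : ℕ, qFact q n ≠ 0)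
include hq

lemma q_add_pow (n : ℕ) :
    (x + y) ^ n = ∑ k ∈ Finset.range (n + 1), qBin q n k • (x ^ k * y ^ (n - k)) := by
  induction n with
  | zero => simp [qBin_self hq 0]
  | succ n ih =>
    have step : ∀ k ∈ Finset.range (n + 1),
        (qBin q n k • (x ^ k * y ^ (n - k))) * (x + y)
          = (qBin q n k * q ^ (n - k)) • (x ^ (k + 1) * y ^ (n - k))
            + qBin q n k • (x ^ k * y ^ (n + 1 - k)) := by
      intro k hk
      rw [Finset.mem_range] at hk
      have e : n + 1 - k = (n - k) + 1 := by omega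
      rw [e, mul_add, smul_mul_assoc, smul_mul_assoc, mul_assoc, ypow_mul x y h,
        mul_smul_comm, smul_smul, ← mul_assoc (x ^ k) x, ← pow_succ, mul_assoc (x ^ k), ← pow_succ]
    rw [pow_succ, ih, Finset.sum_mul, Finset.sum_congr rfl step, Finset.sum_add_distrib]
    -- now rearrange
    rw [Finset.sum_range_succ (fun k => (qBin q n k * q ^ (n - k)) • (x ^ (k + 1) * y ^ (n - k))),
      Finset.sum_range_succ' (fun k => qBin q n k • (x ^ k * y ^ (n + 1 - k)))]
    rw [Finset.sum_range_succ' (fun k => qBin q (n + 1) k • (x ^ k * y ^ (n + 1 - k)))]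
    rw [Finset.sum_range_succ (fun j => qBin q (n + 1) (j + 1) • (x ^ (j + 1) * y ^ (n + 1 - (j + 1))))]
    have hmid : ∀ j ∈ Finset.range n,
        qBin q (n + 1) (j + 1) • (x ^ (j + 1) * y ^ (n + 1 - (j + 1)))
          = (qBin q n j * q ^ (n - j)) • (x ^ (j + 1) * y ^ (n - j))
            + qBin q n (j + 1) • (x ^ (j + 1) * y ^ (n + 1 - (j + 1))) := by
      intro j hj
      rw [Finset.mem_range] at hj
      have e1 : n + 1 - (j + 1) = n - j := by omega
      have e2 : (j + 1) - 1 = j := by omega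
      rw [e1, qBin_rec hq (by omega) (by omega), e2, add_smul, e1, mul_comm (q ^ (n - j))]
    rw [Finset.sum_congr rfl hmid, Finset.sum_add_distrib]
    have elast : qBin q (n + 1) (n + 1) • (x ^ (n + 1) * y ^ (n + 1 - (n + 1)))
        = (qBin q n n * q ^ (n - n)) • (x ^ (n + 1) * y ^ (n - n)) := by
      simp [qBin_self hq]
    have efirst : qBin q (n + 1) 0 • (x ^ 0 * y ^ (n + 1 - 0))
        = qBin q n 0 • (x ^ 0 * y ^ (n + 1 - 0)) := by
      simp [qBin_zero hq]
    rw [elast, efirst]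
    abel

end binom

/-- The addition theorem for `q`-exponentials: if `y x = q x y` in an associative
algebra over a field of characteristic zero, and `q` is such that all `q`-factorials
are invertible (e.g. `q` not a root of unity), then `exp_q(x + y) = exp_q(x) exp_q(y)`. -/
theorem qExp_add {K : Type*} [Field K] [CharZero K] {A : Type*} [Ring A] [Algebra K A]
    (q : K) (hq : ∀ n : ℕ, qFact q n ≠ 0) (x y : A)
    (h : y * x = q • (x * y)) :
    qExp q (x + y) = qExp q x * qExp q y := by
  ext n
  rw [qExp, qExp, qExp, PowerSeries.coeff_mk, PowerSeries.coeff_mul,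
    Finset.Nat.sum_antidiagonal_eq_sum_range_succ_mk]
  simp only [PowerSeries.coeff_mk]
  rw [q_add_pow x y h hq n, Finset.smul_sum]
  refine Finset.sum_congr rfl fun k hk => ?_
  rw [Finset.mem_range] at hk
  rw [smul_smul, smul_mul_assoc, mul_smul_comm, smul_smul]
  congr 1
  rw [qBin]
  have h1 := hq n
  have h2 := hq k
  have h3 := hq (n - k)
  field_simp
end

section
/- q-Taylor formula: for a polynomial f of degree ≤ N and any point a, f(x) = Σ_{n=0}^{N} ((x−a)(x−qa)⋯(x−q^{n−1}a)/(n)_q!) · (∂^{(q)})^n f(a), where ∂^{(q)} is the q-difference derivative. -/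
/-- The `q`-difference derivative of a polynomial, determined by
`∂^{(q)} x^n = (n)_q x^(n-1)`, equivalently `(∂^{(q)} f)(x) = (f(qx) - f(x))/((q-1)x)`. -/
noncomputable def qDerivPoly {K : Type*} [Field K] (q : K) (f : Polynomial K) : Polynomial K :=
  ∑ n ∈ Finset.range (f.natDegree + 1),
    Polynomial.monomial n (qInt q (n + 1) * f.coeff (n + 1))

open Polynomial Finset

section Aux

variable {K : Type*} [Field K] (q : K)

lemma qInt_zero : qInt q 0 = 0 := by simp [qInt]

lemma qInt_one : qInt q 1 = 1 := by simp [qInt]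

lemma qInt_succ (n : ℕ) : qInt q (n + 1) = 1 + q * qInt q n := by
  rw [qInt, Finset.sum_range_succ', qInt, Finset.mul_sum]
  simp [pow_succ, mul_comm, add_comm]

lemma qDerivPoly_coeff (f : K[X]) (n : ℕ) :
    (qDerivPoly q f).coeff n = qInt q (n + 1) * f.coeff (n + 1) := by
  unfold qDerivPoly
  rw [Polynomial.finset_sum_coeff]
  simp only [Polynomial.coeff_monomial]
  rw [Finset.sum_ite_eq' (Finset.range (f.natDegree + 1)) n]
  split_ifs with h
  · rfl
  · have : f.coeff (n + 1) = 0 := by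
      apply Polynomial.coeff_eq_zero_of_natDegree_lt
      simp only [Finset.mem_range] at h
      omega
    simp [this]

lemma qDerivPoly_C_mul (c : K) (f : K[X]) :
    qDerivPoly q (Polynomial.C c * f) = Polynomial.C c * qDerivPoly q f := by
  ext n
  simp only [qDerivPoly_coeff, Polynomial.coeff_C_mul]
  ring

lemma qDerivPoly_sum {ι : Type*} (s : Finset ι) (F : ι → K[X]) :
    qDerivPoly q (∑ i ∈ s, F i) = ∑ i ∈ s, qDerivPoly q (F i) := by
  ext n
  simp [qDerivPoly_coeff, Polynomial.finset_sum_coeff, Finset.mul_sum]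

lemma qDerivPoly_mul_X_sub_C (g : K[X]) (c : K) :
    qDerivPoly q (g * (Polynomial.X - Polynomial.C c)) =
      g + Polynomial.C q * qDerivPoly q g * Polynomial.X
        - Polynomial.C c * qDerivPoly q g := by
  ext n
  rcases n with _ | m
  · simp only [qDerivPoly_coeff, zero_add, Polynomial.coeff_mul_X_sub_C,
      Polynomial.coeff_sub, Polynomial.coeff_add, Polynomial.coeff_C_mul,
      Polynomial.mul_coeff_zero, Polynomial.coeff_X_zero, qInt_one, Polynomial.coeff_C_zero]
    ring
  · simp only [qDerivPoly_coeff, Polynomial.coeff_mul_X_sub_C, Polynomial.coeff_sub,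
      Polynomial.coeff_add, Polynomial.coeff_C_mul, Polynomial.coeff_mul_X]
    rw [qInt_succ q (m + 1)]
    ring

/-- The product `(X - a)(X - qa)⋯(X - q^(n-1)a)`. -/
noncomputable def qProd (a : K) (n : ℕ) : K[X] :=
  ∏ k ∈ Finset.range n, (Polynomial.X - Polynomial.C (q ^ k * a))

lemma qDerivPoly_one : qDerivPoly q (1 : K[X]) = 0 := by
  ext n
  simp [qDerivPoly_coeff, Polynomial.coeff_one]

lemma qDerivPoly_qProd_succ (a : K) (n : ℕ) :
    qDerivPoly q (qProd q a (n + 1)) = Polynomial.C (qInt q (n + 1)) * qProd q a n := by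
  induction n with
  | zero =>
    rw [qProd, Finset.prod_range_one, qProd, Finset.prod_range_zero]
    have h : (Polynomial.X - Polynomial.C (q ^ 0 * a))
        = (1 : K[X]) * (Polynomial.X - Polynomial.C (q ^ 0 * a)) := by ring
    rw [h, qDerivPoly_mul_X_sub_C, qDerivPoly_one, qInt_one]
    simp
  | succ n ih =>
    have h1 : qProd q a (n + 2) = qProd q a (n + 1)
        * (Polynomial.X - Polynomial.C (q ^ (n + 1) * a)) := by
      rw [qProd, qProd, Finset.prod_range_succ]
    have h2 : qProd q a (n + 1) = qProd q a n
        * (Polynomial.X - Polynomial.C (q ^ n * a)) := by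
      rw [qProd, qProd, Finset.prod_range_succ]
    rw [h1, qDerivPoly_mul_X_sub_C, ih, qInt_succ q (n + 1), h2]
    simp only [Polynomial.C_add, Polynomial.C_mul, Polynomial.C_1, pow_succ']
    ring

lemma qDerivPoly_qProd (a : K) (n : ℕ) :
    qDerivPoly q (qProd q a n) = Polynomial.C (qInt q n) * qProd q a (n - 1) := by
  cases n with
  | zero =>
    rw [qProd, Finset.prod_range_zero, qDerivPoly_one, qInt_zero]
    simp
  | succ n => exact qDerivPoly_qProd_succ q a n

lemma qDerivPoly_iterate_C_mul (c : K) (f : K[X]) (m : ℕ) :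
    (qDerivPoly q)^[m] (Polynomial.C c * f) = Polynomial.C c * (qDerivPoly q)^[m] f := by
  induction m generalizing f with
  | zero => rfl
  | succ m ih => rw [Function.iterate_succ_apply, qDerivPoly_C_mul, ih,
      Function.iterate_succ_apply]

lemma qDerivPoly_iterate_sum {ι : Type*} (s : Finset ι) (F : ι → K[X]) (m : ℕ) :
    (qDerivPoly q)^[m] (∑ i ∈ s, F i) = ∑ i ∈ s, (qDerivPoly q)^[m] (F i) := by
  induction m generalizing F with
  | zero => simp
  | succ m ih =>
    rw [Function.iterate_succ_apply, qDerivPoly_sum, ih]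
    simp [Function.iterate_succ_apply]

lemma qDerivPoly_iterate_qProd (a : K) (m : ℕ) : ∀ n : ℕ,
    (qDerivPoly q)^[m] (qProd q a n)
      = Polynomial.C (∏ j ∈ Finset.range m, qInt q (n - j)) * qProd q a (n - m) := by
  induction m with
  | zero => intro n; simp
  | succ m ih =>
    intro n
    rw [Function.iterate_succ_apply, qDerivPoly_qProd, qDerivPoly_iterate_C_mul, ih,
      ← mul_assoc, ← Polynomial.C_mul, Finset.prod_range_succ']
    have e1 : (∏ j ∈ Finset.range m, qInt q (n - (j + 1)))
        = ∏ j ∈ Finset.range m, qInt q (n - 1 - j) := by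
      apply Finset.prod_congr rfl
      intro j _
      congr 1
      omega
    have e2 : n - 1 - m = n - (m + 1) := by omega
    rw [e1, e2, Nat.sub_zero, mul_comm (qInt q n)]

lemma qProd_eval_self (a : K) (n : ℕ) :
    (qProd q a n).eval a = if n = 0 then 1 else 0 := by
  cases n with
  | zero => simp [qProd]
  | succ n =>
    rw [qProd, Polynomial.eval_prod, if_neg (Nat.succ_ne_zero n)]
    apply Finset.prod_eq_zero (Finset.mem_range.mpr (Nat.succ_pos n))
    simp

lemma qProd_monic (a : K) (n : ℕ) : (qProd q a n).Monic :=
  Polynomial.monic_prod_of_monic _ _ fun _ _ => Polynomial.monic_X_sub_C _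

lemma qProd_natDegree (a : K) (n : ℕ) : (qProd q a n).natDegree = n := by
  rw [qProd, Polynomial.natDegree_prod]
  · simp only [← Polynomial.C_pow, ← Polynomial.C_mul, Polynomial.natDegree_X_sub_C]
    simp
  · intro k _
    exact Polynomial.X_sub_C_ne_zero _

lemma exists_qProd_expansion (a : K) : ∀ (N : ℕ) (f : K[X]), f.natDegree ≤ N →
    ∃ b : ℕ → K, f = ∑ n ∈ Finset.range (N + 1), Polynomial.C (b n) * qProd q a n := by
  intro N
  induction N with
  | zero =>
    intro f hf
    refine ⟨fun _ => f.coeff 0, ?_⟩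
    rw [Finset.sum_range_one, qProd, Finset.prod_range_zero, mul_one]
    exact Polynomial.eq_C_of_natDegree_le_zero hf
  | succ N ih =>
    intro f hf
    set c := f.coeff (N + 1) with hc
    set g := f - Polynomial.C c * qProd q a (N + 1) with hg
    have hcoeff : (qProd q a (N + 1)).coeff (N + 1) = 1 := by
      have := (qProd_monic q a (N + 1)).coeff_natDegree
      rwa [qProd_natDegree] at this
    have hgd : g.natDegree ≤ N := by
      rw [Polynomial.natDegree_le_iff_coeff_eq_zero]
      intro m hm
      rcases eq_or_lt_of_le (Nat.succ_le_of_lt hm) with h | h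
      · rw [hg]
        simp only [Polynomial.coeff_sub, Polynomial.coeff_C_mul, ← h, hcoeff, mul_one, ← hc,
          sub_self]
      · rw [hg]
        have h1 : f.coeff m = 0 := Polynomial.coeff_eq_zero_of_natDegree_lt (by omega)
        have h2 : (qProd q a (N + 1)).coeff m = 0 :=
          Polynomial.coeff_eq_zero_of_natDegree_lt (by rw [qProd_natDegree]; omega)
        simp [h1, h2]
    obtain ⟨b, hb⟩ := ih g hgd
    refine ⟨fun n => if n = N + 1 then c else b n, ?_⟩
    rw [Finset.sum_range_succ]
    have hrw : ∑ n ∈ Finset.range (N + 1),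
          Polynomial.C (if n = N + 1 then c else b n) * qProd q a n
        = ∑ n ∈ Finset.range (N + 1), Polynomial.C (b n) * qProd q a n := by
      apply Finset.sum_congr rfl
      intro n hn
      rw [if_neg]
      intro h
      rw [Finset.mem_range] at hn
      omega
    rw [hrw, ← hb]
    have hval : (fun n => if n = N + 1 then c else b n) (N + 1) = c := by simp
    rw [hval, hg]
    ring

lemma qProd_iterate_eval (a : K) (N : ℕ) (b : ℕ → K) (m : ℕ) (hm : m ≤ N) :
    (((qDerivPoly q)^[m])
        (∑ n ∈ Finset.range (N + 1), Polynomial.C (b n) * qProd q a n)).eval a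
      = b m * qFact q m := by
  rw [qDerivPoly_iterate_sum]
  simp only [qDerivPoly_iterate_C_mul, qDerivPoly_iterate_qProd]
  rw [Polynomial.eval_finset_sum]
  simp only [Polynomial.eval_mul, Polynomial.eval_C, qProd_eval_self]
  rw [Finset.sum_eq_single m]
  · rw [Nat.sub_self, if_pos rfl, mul_one]
    congr 1
    rw [qFact, ← Finset.prod_range_reflect (fun j => qInt q (j + 1)) m]
    apply Finset.prod_congr rfl
    intro j hj
    rw [Finset.mem_range] at hj
    congr 1
    omega
  · intro n hn hne
    rcases lt_or_gt_of_ne hne with h | h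
    · have : (∏ j ∈ Finset.range m, qInt q (n - j)) = 0 := by
        apply Finset.prod_eq_zero (Finset.mem_range.mpr h)
        rw [Nat.sub_self, qInt_zero]
      rw [this]
      ring
    · rw [if_neg (by omega), mul_zero, mul_zero]
  · intro h
    exact absurd (Finset.mem_range.mpr (by omega)) h

end Aux

/-- The `q`-Taylor formula: for a polynomial `f` of degree `≤ N` and any point `a`,
`f(x) = Σ_{n=0}^{N} ((x-a)(x-qa)⋯(x-q^(n-1)a)/(n)_q!) (∂^{(q)})^n f(a)`,
provided all the `q`-factorials `(n)_q!` for `n ≤ N` are nonzero. -/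
theorem qTaylor {K : Type*} [Field K] (q : K) (N : ℕ)
    (hq : ∀ n ≤ N, qFact q n ≠ 0)
    (f : Polynomial K) (hf : f.natDegree ≤ N) (a : K) (x : K) :
    f.eval x = ∑ n ∈ Finset.range (N + 1),
      (qFact q n)⁻¹ * (∏ k ∈ Finset.range n, (x - q ^ k * a)) *
        (((qDerivPoly q)^[n] f).eval a) := by
  obtain ⟨b, hb⟩ := exists_qProd_expansion q a N f hf
  rw [hb, Polynomial.eval_finset_sum]
  apply Finset.sum_congr rfl
  intro n hn
  rw [Finset.mem_range] at hn
  have hn' : n ≤ N := by omega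
  rw [qProd_iterate_eval q a N b n hn']
  rw [Polynomial.eval_mul, Polynomial.eval_C, qProd, Polynomial.eval_prod]
  simp only [Polynomial.eval_sub, Polynomial.eval_X, Polynomial.eval_C]
  field_simp [hq n hn']
  ring
end

section
/- The function τ(u,x) = a + b·u + c·x + d·u·x with coefficients a, b, c, d generating Fun_q(SL_2) satisfies the first equation of the q-Liouville hierarchy: τ(u,x)·∂_x^{(q^{-2})}τ(q^{-1}u, qx) = ∂_x^{(q^{-2})}τ(u,x)·τ(q^{-1}u, qx). -/
section

variable {K : Type*} [Field K]

/-- The `q`-difference derivative on polynomials (in the variable `X`) with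
coefficients in a possibly noncommutative ring `R`: it sends `X^n` to `(n)_q X^(n-1)`,
equivalently `(∂_X^{(q)}F)(X) = (F(qX) − F(X))/((q−1)X)`. -/
noncomputable def qDerivP {R : Type*} [Semiring R] [Module K R] (q : K)
    (f : Polynomial R) : Polynomial R :=
  ∑ n ∈ Finset.range (f.natDegree + 1),
    Polynomial.monomial n ((∑ i ∈ Finset.range (n + 1), q ^ i) • f.coeff (n + 1))

/-- The substitution `X ↦ c·X` on polynomials. -/
noncomputable def scaleVar {R : Type*} [Semiring R] [Module K R] (c : K)
    (f : Polynomial R) : Polynomial R :=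
  ∑ n ∈ Finset.range (f.natDegree + 1), Polynomial.monomial n (c ^ n • f.coeff n)

/-- Apply an operation `g` to every coefficient of a polynomial; this is used to act on
the inner variable `u` of a polynomial in two central variables `u, x`. -/
noncomputable def mapCoeff {R : Type*} [Semiring R] (g : R → R)
    (f : Polynomial R) : Polynomial R :=
  ∑ n ∈ Finset.range (f.natDegree + 1), Polynomial.monomial n (g (f.coeff n))

open Polynomial

lemma qDerivP_deg_le_one {R : Type*} [Semiring R] [Module K R] (q : K)
    (f : Polynomial R) (hf : f.natDegree ≤ 1) :
    qDerivP q f = Polynomial.C (f.coeff 1) := by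
  unfold qDerivP
  interval_cases h : f.natDegree
  · have h1 : f.coeff 1 = 0 := coeff_eq_zero_of_natDegree_lt (by omega)
    simp [h1]
  · have h2 : f.coeff 2 = 0 := coeff_eq_zero_of_natDegree_lt (by omega)
    simp [Finset.sum_range_succ, h2]

lemma scaleVar_deg_le_one {R : Type*} [Semiring R] [Module K R] (s : K)
    (f : Polynomial R) (hf : f.natDegree ≤ 1) :
    scaleVar s f = Polynomial.C (f.coeff 0) + Polynomial.C (s • f.coeff 1) * Polynomial.X := by
  unfold scaleVar
  interval_cases h : f.natDegree
  · have h1 : f.coeff 1 = 0 := coeff_eq_zero_of_natDegree_lt (by omega)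
    simp [h1]
  · simp [Finset.sum_range_succ, Polynomial.C_mul_X_eq_monomial, pow_one]

lemma mapCoeff_deg_le_one {R : Type*} [Semiring R] (g : R → R) (hg : g 0 = 0)
    (f : Polynomial R) (hf : f.natDegree ≤ 1) :
    mapCoeff g f = Polynomial.C (g (f.coeff 0)) + Polynomial.C (g (f.coeff 1)) * Polynomial.X := by
  unfold mapCoeff
  interval_cases h : f.natDegree
  · have h1 : f.coeff 1 = 0 := coeff_eq_zero_of_natDegree_lt (by omega)
    simp [h1, hg]
  · simp [Finset.sum_range_succ, Polynomial.C_mul_X_eq_monomial]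

lemma lin_deg_le_one {R : Type*} [Semiring R] (p r : R) :
    (Polynomial.C p + Polynomial.C r * Polynomial.X).natDegree ≤ 1 := by
  refine le_trans (natDegree_add_le _ _) ?_
  simp only [natDegree_C, max_le_iff]
  refine ⟨Nat.zero_le _, le_trans natDegree_mul_le ?_⟩
  simp [natDegree_X_le]

lemma lin_coeff0 {R : Type*} [Semiring R] (p r : R) :
    (Polynomial.C p + Polynomial.C r * Polynomial.X).coeff 0 = p := by simp

lemma lin_coeff1 {R : Type*} [Semiring R] (p r : R) :
    (Polynomial.C p + Polynomial.C r * Polynomial.X).coeff 1 = r := by simp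

lemma scaleVar_zero' {R : Type*} [Semiring R] [Module K R] (s : K) :
    scaleVar s (0 : Polynomial R) = 0 := by simp [scaleVar]

lemma lin_mul {R : Type*} [Ring R] (p r p' r' : R) :
    (Polynomial.C p + Polynomial.C r * Polynomial.X) * (Polynomial.C p' + Polynomial.C r' * Polynomial.X)
      = Polynomial.C (p * p') + Polynomial.C (p * r' + r * p') * Polynomial.X
        + Polynomial.C (r * r') * Polynomial.X ^ 2 := by
  have h1 : Polynomial.C r * Polynomial.X * Polynomial.C p'
      = Polynomial.C r * Polynomial.C p' * Polynomial.X := by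
    rw [mul_assoc, X_mul_C, ← mul_assoc]
  have h2 : Polynomial.C r * Polynomial.X * (Polynomial.C r' * Polynomial.X)
      = Polynomial.C r * Polynomial.C r' * Polynomial.X * Polynomial.X := by
    rw [mul_assoc, ← mul_assoc Polynomial.X, X_mul_C]
    simp only [← mul_assoc]
  simp only [add_mul, mul_add, map_add, map_mul, sq, ← mul_assoc, h1]
  rw [mul_assoc (Polynomial.C r * Polynomial.X) (Polynomial.C r') Polynomial.X, h2]
  abel

lemma mul_C_lin {R : Type*} [Ring R] (p r s : R) :
    (Polynomial.C p + Polynomial.C r * Polynomial.X) * Polynomial.C s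
      = Polynomial.C (p * s) + Polynomial.C (r * s) * Polynomial.X := by
  rw [add_mul, ← map_mul, mul_assoc, X_mul_C, ← mul_assoc, ← map_mul]

lemma C_mul_lin {R : Type*} [Ring R] (s p r : R) :
    Polynomial.C s * (Polynomial.C p + Polynomial.C r * Polynomial.X)
      = Polynomial.C (s * p) + Polynomial.C (s * r) * Polynomial.X := by
  rw [mul_add, ← map_mul, ← mul_assoc, ← map_mul]

/-- With `a, b, c, d` the generators of `Fun_q(SL_2)` and `u, x` central commuting
variables, `τ(u,x) = a + bu + cx + dux` (an element of `A[u][x]`, inner variable `u`,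
outer variable `x`) satisfies the first equation of the `q`-Liouville hierarchy:
`τ(u,x)·∂_x^{(q^{-2})}τ(q^{-1}u, qx) = ∂_x^{(q^{-2})}τ(u,x)·τ(q^{-1}u, qx)`. -/
theorem qLiouville_first {A : Type*} [Ring A] [Algebra K A]
    (q : K) (hq : q ≠ 0) (hroot : ∀ n : ℕ, q ^ (n + 1) ≠ 1)
    (a b c d : A)
    (hab : a * b = q⁻¹ • (b * a))
    (hac : a * c = q⁻¹ • (c * a))
    (hbd : b * d = q⁻¹ • (d * b))
    (hcd : c * d = q⁻¹ • (d * c))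
    (hbc : b * c = c * b)
    (hdet : a * d - q⁻¹ • (b * c) = 1)
    (hdet' : d * a - q • (b * c) = 1) :
    letI tau : Polynomial (Polynomial A) :=
      Polynomial.C (Polynomial.C a + Polynomial.C b * Polynomial.X) +
        Polynomial.C (Polynomial.C c + Polynomial.C d * Polynomial.X) * Polynomial.X
    -- `τ(q⁻¹u, qx)`: substitute `u ↦ q⁻¹u` and `x ↦ qx`
    letI sub : Polynomial (Polynomial A) → Polynomial (Polynomial A) :=
      fun F => scaleVar q (mapCoeff (scaleVar q⁻¹) F)
    tau * qDerivP (q ^ (-2 : ℤ)) (sub tau) = qDerivP (q ^ (-2 : ℤ)) tau * sub tau := by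
  have hqq : ∀ r : A, q • q⁻¹ • r = r := fun r => by
    rw [smul_smul, mul_inv_cancel₀ hq, one_smul]
  set P0 : Polynomial A := Polynomial.C a + Polynomial.C b * Polynomial.X with hP0def
  set P1 : Polynomial A := Polynomial.C c + Polynomial.C d * Polynomial.X with hP1def
  set P0' : Polynomial A := Polynomial.C a + Polynomial.C (q⁻¹ • b) * Polynomial.X with hP0'def
  set Q : Polynomial A := Polynomial.C (q • c) + Polynomial.C d * Polynomial.X with hQdef
  show (Polynomial.C P0 + Polynomial.C P1 * Polynomial.X) *
        qDerivP (q ^ (-2 : ℤ)) (scaleVar q (mapCoeff (scaleVar q⁻¹)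
          (Polynomial.C P0 + Polynomial.C P1 * Polynomial.X)))
      = qDerivP (q ^ (-2 : ℤ)) (Polynomial.C P0 + Polynomial.C P1 * Polynomial.X) *
        scaleVar q (mapCoeff (scaleVar q⁻¹)
          (Polynomial.C P0 + Polynomial.C P1 * Polynomial.X))
  have hmap : mapCoeff (scaleVar q⁻¹) (Polynomial.C P0 + Polynomial.C P1 * Polynomial.X)
      = Polynomial.C (scaleVar q⁻¹ P0) + Polynomial.C (scaleVar q⁻¹ P1) * Polynomial.X := by
    rw [mapCoeff_deg_le_one (scaleVar q⁻¹) (scaleVar_zero' q⁻¹) _ (lin_deg_le_one _ _),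
      lin_coeff0, lin_coeff1]
  have hs0 : scaleVar q⁻¹ P0 = P0' := by
    rw [hP0def, scaleVar_deg_le_one _ _ (lin_deg_le_one _ _), lin_coeff0, lin_coeff1, hP0'def]
  have hs1 : scaleVar q⁻¹ P1 = Polynomial.C c + Polynomial.C (q⁻¹ • d) * Polynomial.X := by
    rw [hP1def, scaleVar_deg_le_one _ _ (lin_deg_le_one _ _), lin_coeff0, lin_coeff1]
  have hsub : scaleVar q (mapCoeff (scaleVar q⁻¹)
        (Polynomial.C P0 + Polynomial.C P1 * Polynomial.X))
      = Polynomial.C P0' + Polynomial.C Q * Polynomial.X := by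
    rw [hmap, hs0, hs1, scaleVar_deg_le_one _ _ (lin_deg_le_one _ _), lin_coeff0, lin_coeff1]
    congr 2
    rw [hQdef]
    simp only [smul_add, ← smul_mul_assoc, Polynomial.smul_C, hqq d]
  rw [hsub]
  rw [qDerivP_deg_le_one _ _ (lin_deg_le_one _ _), lin_coeff1]
  rw [qDerivP_deg_le_one _ _ (lin_deg_le_one _ _), lin_coeff1]
  rw [mul_C_lin, C_mul_lin]
  have key : P0 * Q = P1 * P0' := by
    rw [hP0def, hP1def, hP0'def, hQdef, lin_mul, lin_mul]
    have e0 : a * (q • c) = c * a := by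
      rw [mul_smul_comm, hac, hqq]
    have e1 : a * d + b * (q • c) = c * (q⁻¹ • b) + d * a := by
      have had : a * d = 1 + q⁻¹ • (b * c) := by
        rw [← hdet]; abel
      have hda : d * a = 1 + q • (b * c) := by
        rw [← hdet']; abel
      rw [mul_smul_comm, mul_smul_comm, ← hbc, had, hda]
      abel
    have e2 : b * d = d * (q⁻¹ • b) := by
      rw [mul_smul_comm, hbd]
    rw [e0, e1, e2]
  rw [key]

end
end
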